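/- Consider q̄ drawn uniformly at random from P(M)^W (each woman's preference list independently uniform over all preference lists over M). For every d ∈ ℕ and every ε > 0 there exists N such that for all finite disjoint sets M, W with |M| ≥ 3, |W| ≥ N, and |M| ≤ |W|^d, the probability that there exists a q̄-stable one-side-querying matching mechanism that is OSP for more than two men is less than ε. -/

import Mathlib

/-- A preference list over `α` (a totally ordered subset of `α`), represented as a
duplicate-free list, most-preferred member first. Members of `α` not on the list
are unranked (unacceptable). -/
abbrev PrefList (α : Type) : Type := {l : List α // l.Nodup}

/-- `x ≻ y` according to `p`: `x` is ranked above `y` on `p`, or `x` appears on `p`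
while `y` does not. -/
def prefers {α : Type} (p : PrefList α) (x y : α) : Prop :=
  [x, y].Sublist p.val ∨ (x ∈ p.val ∧ y ∉ p.val)

/-- Strict preference over possible outcomes, where `none` means being unmatched:
being matched to someone on one's list is better than being unmatched, which is
better than being matched to someone not on one's list. -/
def outPrefers {α : Type} (p : PrefList α) : Option α → Option α → Prop
  | some x, some y => prefers p x y
  | some x, none => x ∈ p.val
  | none, some y => y ∉ p.val
  | none, none => False

/-- A preference list is full if it ranks every member of the opposite side. -/
def IsFull {α : Type} (p : PrefList α) : Prop := ∀ x : α, x ∈ p.val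

/-- A matching between `M` and `W`: a one-to-one mapping between a subset of `M`
and a subset of `W`, recorded as a partial injective function from men to women
(`μ.toFun m = none` meaning that `m` is unmatched). -/
structure Matching (M W : Type) where
  toFun : M → Option W
  inj : ∀ ⦃m m' : M⦄ ⦃w : W⦄, toFun m = some w → toFun m' = some w → m = m'

/-- Woman `w` strictly prefers man `m` (according to her list `q`) over the partner
matched to her by `μ` (or over remaining unmatched, if `μ` leaves her unmatched). -/
def womanPrefersOver {M W : Type} (q : PrefList M) (μ : Matching M W) (w : W) (m : M) : Prop :=
  (∃ m', μ.toFun m' = some w ∧ prefers q m m') ∨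
    ((∀ m', μ.toFun m' ≠ some w) ∧ m ∈ q.val)

/-- `μ` is stable with respect to men's profile `pbar` and women's profile `qbar`:
there is no man and woman each preferring the other over their match under `μ`, and
no participant is matched with a partner not on their preference list. -/
def IsStable {M W : Type} (pbar : M → PrefList W) (qbar : W → PrefList M)
    (μ : Matching M W) : Prop :=
  ¬ ((∃ m w, outPrefers (pbar m) (some w) (μ.toFun m) ∧ womanPrefersOver (qbar w) μ w m) ∨
     (∃ m w, μ.toFun m = some w ∧ (w ∉ (pbar m).val ∨ m ∉ (qbar w).val)))

/-- `C` is `qbar`-stable: `C pbar` is stable with respect to `pbar` and `qbar` for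
every men's profile `pbar`. -/
def IsStableRule {M W : Type} (qbar : W → PrefList M)
    (C : (M → PrefList W) → Matching M W) : Prop :=
  ∀ pbar, IsStable pbar qbar (C pbar)

/-- `C` is the `M`-optimal stable matching rule `C^qbar`: it maps each men's profile
`pbar` to a stable matching that every man weakly prefers to every stable matching. -/
def IsMOptimalStableRule {M W : Type} (qbar : W → PrefList M)
    (C : (M → PrefList W) → Matching M W) : Prop :=
  ∀ pbar, IsStable pbar qbar (C pbar) ∧
    ∀ μ, IsStable pbar qbar μ → ∀ m, ¬ outPrefers (pbar m) (μ.toFun m) ((C pbar).toFun m)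

/-- `C` is strategy-proof for man `m`. -/
def StrategyProofFor {M W : Type} [DecidableEq M]
    (C : (M → PrefList W) → Matching M W) (m : M) : Prop :=
  ∀ (pbar : M → PrefList W) (p' : PrefList W),
    ¬ outPrefers (pbar m) ((C (Function.update pbar m p')).toFun m) ((C pbar).toFun m)

/-- A women's profile `qbar` is cyclical if there are men `a`, `b`, `c` and women
`x`, `y` with `a ≻ₓ b ≻ₓ c ≻_y a`. -/
def Cyclical {M W : Type} (qbar : W → PrefList M) : Prop :=
  ∃ (a b c : M) (x y : W),
    prefers (qbar x) a b ∧ prefers (qbar x) b c ∧ prefers (qbar y) c a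

/-- A one-side-querying extensive-form matching mechanism for `M` over `W`: a rooted
tree each of whose leaves is labeled by a matching and each of whose internal nodes
queries a man; the edges out of an internal node querying `q` are the fibers of the
function `next` (two preference lists for `q` lie on the same outgoing edge iff they
are routed to the same subtree). -/
inductive Mech (M W : Type) : Type
  | leaf (μ : Matching M W)
  | node (q : M) (next : PrefList W → Mech M W)

/-- The matching rule implemented by a mechanism: route the profile from the root to
a leaf and output that leaf's matching. -/
def Mech.run {M W : Type} : Mech M W → (M → PrefList W) → Matching M W
  | .leaf μ, _ => μ
  | .node q next, pbar => (next (pbar q)).run pbar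

/-- Auxiliary definition of obvious strategy-proofness for man `m`: `P` is the set of
profiles passing through the current node. At each node querying `m`, for all profiles
`pbar`, `pbar'` passing through the node at which `m`'s lists diverge (are routed to
distinct subtrees), the outcome of `pbar'` is not strictly preferred (according to
`pbar m`) to the outcome of `pbar`. -/
def Mech.OSPAux {M W : Type} (m : M) : Mech M W → Set (M → PrefList W) → Prop
  | .leaf _, _ => True
  | .node q next, P =>
      (q = m → ∀ pbar ∈ P, ∀ pbar' ∈ P, next (pbar m) ≠ next (pbar' m) →
        ¬ outPrefers (pbar m) (((next (pbar' m)).run pbar').toFun m)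
            (((next (pbar m)).run pbar).toFun m)) ∧
      ∀ p : PrefList W, Mech.OSPAux m (next p) {pbar ∈ P | next (pbar q) = next p}

/-- `I` is obviously strategy-proof (OSP) for man `m`. -/
def Mech.OSPFor {M W : Type} (I : Mech M W) (m : M) : Prop :=
  Mech.OSPAux m I Set.univ

/-- A matching rule is OSP-implementable if it is implemented by some mechanism that
is OSP for every man. -/
def OSPImplementable {M W : Type} (C : (M → PrefList W) → Matching M W) : Prop :=
  ∃ I : Mech M W, (∀ m : M, I.OSPFor m) ∧ ∀ pbar, I.run pbar = C pbar

/-- A two-sides-querying extensive-form matching mechanism: internal nodes may query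
either a man (about his preference list over `W`) or a woman (about her preference
list over `M`). -/
inductive Mech2 (M W : Type) : Type
  | leaf (μ : Matching M W)
  | nodeM (q : M) (next : PrefList W → Mech2 M W)
  | nodeW (q : W) (next : PrefList M → Mech2 M W)

/-- The two-sides-querying matching rule implemented by a two-sides-querying mechanism. -/
def Mech2.run {M W : Type} :
    Mech2 M W → (M → PrefList W) → (W → PrefList M) → Matching M W
  | .leaf μ, _, _ => μ
  | .nodeM q next, pbar, qbar => (next (pbar q)).run pbar qbar
  | .nodeW q next, pbar, qbar => (next (qbar q)).run pbar qbar

/-- Auxiliary definition of obvious strategy-proofness of a two-sides-querying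
mechanism for man `m`; `P` is the set of two-sided profiles passing through the
current node. -/
def Mech2.OSPAux {M W : Type} (m : M) :
    Mech2 M W → Set ((M → PrefList W) × (W → PrefList M)) → Prop
  | .leaf _, _ => True
  | .nodeM q next, P =>
      (q = m → ∀ r ∈ P, ∀ r' ∈ P, next (r.1 m) ≠ next (r'.1 m) →
        ¬ outPrefers (r.1 m) (((next (r'.1 m)).run r'.1 r'.2).toFun m)
            (((next (r.1 m)).run r.1 r.2).toFun m)) ∧
      ∀ p : PrefList W, Mech2.OSPAux m (next p) {r ∈ P | next (r.1 q) = next p}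
  | .nodeW q next, P =>
      ∀ p : PrefList M, Mech2.OSPAux m (next p) {r ∈ P | next (r.2 q) = next p}

/-- A two-sides-querying mechanism `I` is obviously strategy-proof (OSP) for man `m`. -/
def Mech2.OSPForM {M W : Type} (I : Mech2 M W) (m : M) : Prop :=
  Mech2.OSPAux m I Set.univ

/-!
Suppose woman `x` ranks `a ≻ b ≻ c` and woman `y` ranks `c ≻ b ≻ a`. Consider the eight profiles
in which `a` reports `[y]` or `[y, x]`, `b` reports `[x]` or `[y, x]`, `c` reports `[x]` or
`[x, y]`, and every other man reports the empty list. A leaf cannot be stable for all of them,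
so some node separates them; at the first such node the queried man is `a`, `b` or `c`, and the
stable outcomes of two profiles passing through it give him a profitable deviation across that
node, contradicting obvious strategy-proofness.

A uniformly random preference list over `M` contains a given triple in a given order with
probability at least `1/18`: at least `|M|!/6` lists do, out of at most `3 |M|!`. So for each of
the at most `|M|^3 ≤ |W|^(3d)` ordered triples, the probability that no woman ranks it in that
order is at most `(17/18)^|W|`, and a union bound finishes.
-/

open List
open scoped Nat

section Preferences

variable {α : Type} {p : PrefList α} {u v w : α}

theorem List.Nodup.not_sublist_pair_swap {l : List α} (hl : l.Nodup) (h : [u, v] <+ l) :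
    ¬ [v, u] <+ l := by
  induction l with
  | nil => simp at h
  | cons z t ih =>
    rw [List.nodup_cons] at hl
    rw [List.sublist_cons_iff] at h ⊢
    rintro (h' | ⟨r, hr, hr'⟩) <;> rcases h with h | ⟨r', hr₁, hr₁'⟩
    · exact ih hl.2 h h'
    all_goals grind

theorem prefers.mem_left (h : prefers p u v) : u ∈ p.val :=
  h.elim (fun h => h.subset (by simp)) And.left

theorem prefers.asymm (h : prefers p u v) : ¬ prefers p v u := by
  rintro (h' | ⟨hv, hu⟩)
  · rcases h with h | ⟨-, hv⟩
    · exact p.2.not_sublist_pair_swap h h'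
    · exact hv (h'.subset (by simp))
  · exact hu h.mem_left

theorem prefers.ne (h : prefers p u v) : u ≠ v := by
  rintro rfl
  exact h.asymm h

theorem prefers_of_head?_eq (hw : p.val.head? = some w) (hu : u ≠ w) : prefers p w u := by
  obtain ⟨t, ht⟩ := List.head?_eq_some_iff.mp hw
  by_cases hut : u ∈ p.val
  · rw [ht, List.mem_cons] at hut
    exact Or.inl (ht ▸ List.cons_sublist_cons.mpr
      (List.singleton_sublist.mpr (hut.resolve_left hu)))
  · exact Or.inr ⟨ht ▸ List.mem_cons_self, hut⟩

theorem outPrefers_some_of_head?_eq (hw : p.val.head? = some w) {o : Option α}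
    (ho : o ≠ some w) : outPrefers p (some w) o := by
  cases o with
  | none => exact List.mem_of_mem_head? hw
  | some u => exact prefers_of_head?_eq hw fun h => ho (h ▸ rfl)

end Preferences

namespace IsStable

variable {M W : Type} {pbar : M → PrefList W} {qbar : W → PrefList M} {μ : Matching M W}
  {m : M} {w : W}

theorem mem_of_toFun_eq_some (h : IsStable pbar qbar μ) (hm : μ.toFun m = some w) :
    w ∈ (pbar m).val ∧ m ∈ (qbar w).val := by
  by_contra hc
  exact h (Or.inr ⟨m, w, hm, by tauto⟩)

theorem not_outPrefers (h : IsStable pbar qbar μ) (hm : m ∈ (qbar w).val)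
    (hrival : ∀ m', μ.toFun m' = some w → m' ≠ m → prefers (qbar w) m m') :
    ¬ outPrefers (pbar m) (some w) (μ.toFun m) := by
  intro hmw
  refine h (Or.inl ⟨m, w, hmw, ?_⟩)
  by_cases hmatched : ∃ m', μ.toFun m' = some w
  · obtain ⟨m', hm'⟩ := hmatched
    refine Or.inl ⟨m', hm', hrival m' hm' ?_⟩
    rintro rfl
    rw [hm'] at hmw
    exact hmw.asymm hmw
  · exact Or.inr ⟨fun m' hm' => hmatched ⟨m', hm'⟩, hm⟩

theorem toFun_ne_none (h : IsStable pbar qbar μ) (hw : w ∈ (pbar m).val)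
    (hm : m ∈ (qbar w).val)
    (hrival : ∀ m', μ.toFun m' = some w → m' ≠ m → prefers (qbar w) m m') :
    μ.toFun m ≠ none := fun hnone =>
  h.not_outPrefers hm hrival (by rw [hnone]; exact hw)

theorem toFun_eq_of_head?_eq (h : IsStable pbar qbar μ) (hw : (pbar m).val.head? = some w)
    (hm : m ∈ (qbar w).val)
    (hrival : ∀ m', μ.toFun m' = some w → m' ≠ m → prefers (qbar w) m m') :
    μ.toFun m = some w := by
  by_contra hne
  exact h.not_outPrefers hm hrival (outPrefers_some_of_head?_eq hw hne)

end IsStable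

def profileBox {M W : Type} (p₀ p₁ : M → PrefList W) : Set (M → PrefList W) :=
  {p | ∀ m, p m = p₀ m ∨ p m = p₁ m}

theorem Mech.exists_not_OSPFor_of_profitable_deviations {M W : Type}
    {R : (M → PrefList W) → Matching M W → Prop} {p₀ p₁ : M → PrefList W}
    (hconst : ¬ ∃ μ, ∀ p ∈ profileBox p₀ p₁, R p μ)
    (hdev : ∀ m, p₀ m ≠ p₁ m → ∃ p ∈ profileBox p₀ p₁, ∃ p' ∈ profileBox p₀ p₁,
      p m = p₁ m ∧ p' m = p₀ m ∧
        ∀ μ μ', R p μ → R p' μ' → outPrefers (p₁ m) (μ'.toFun m) (μ.toFun m))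
    (I : Mech M W) (hI : ∀ p ∈ profileBox p₀ p₁, R p (I.run p)) :
    ∃ m, p₀ m ≠ p₁ m ∧ ¬ I.OSPFor m := by
  by_contra! hosp
  suffices ∀ (J : Mech M W) (P : Set (M → PrefList W)), profileBox p₀ p₁ ⊆ P →
      (∀ p ∈ profileBox p₀ p₁, R p (J.run p)) → (∀ m, p₀ m ≠ p₁ m → J.OSPAux m P) → False from
    this I Set.univ (Set.subset_univ _) hI hosp
  intro J
  induction J with
  | leaf μ => exact fun _ _ hJ _ => hconst ⟨μ, hJ⟩
  | node q next ih =>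
    intro P hP hJ hosp
    by_cases hsplit : next (p₀ q) = next (p₁ q)
    · have hroute : ∀ p ∈ profileBox p₀ p₁, next (p q) = next (p₀ q) := fun p hp =>
        (hp q).elim (fun h => h ▸ rfl) (fun h => h ▸ hsplit.symm)
      refine ih (p₀ q) {p ∈ P | next (p q) = next (p₀ q)} (fun p hp => ⟨hP hp, hroute p hp⟩)
        (fun p hp => ?_) (fun m hm => (hosp m hm).2 (p₀ q))
      simpa only [Mech.run, hroute p hp] using hJ p hp
    · have hq : p₀ q ≠ p₁ q := fun h => hsplit (h ▸ rfl)
      obtain ⟨p, hp, p', hp', hpq, hp'q, hviol⟩ := hdev q hq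
      have hosp_q := (hosp q hq).1 rfl p (hP hp) p' (hP hp')
        (by rw [hpq, hp'q]; exact Ne.symm hsplit)
      have hprofitable := hviol _ _ (hJ p hp) (hJ p' hp')
      rw [← hpq] at hprofitable
      exact hosp_q hprofitable

section TripleProfile

variable {M W : Type}

def PrefList.single {α : Type} (u : α) : PrefList α := ⟨[u], List.nodup_singleton u⟩

def PrefList.pair {α : Type} (u v : α) (h : u ≠ v) : PrefList α := ⟨[u, v], by simpa using h⟩

open Classical in
noncomputable def tripleProfile (a b c : M) (pa pb pc : PrefList W) : M → PrefList W :=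
  fun m => if m = a then pa else if m = b then pb else if m = c then pc else ⟨[], List.nodup_nil⟩

variable {a b c m : M} {pa pb pc : PrefList W}

@[simp] theorem tripleProfile_left : tripleProfile a b c pa pb pc a = pa := by
  simp [tripleProfile]

theorem tripleProfile_middle (hab : a ≠ b) : tripleProfile a b c pa pb pc b = pb := by
  simp [tripleProfile, hab.symm]

theorem tripleProfile_right (hac : a ≠ c) (hbc : b ≠ c) : tripleProfile a b c pa pb pc c = pc := by
  simp [tripleProfile, hac.symm, hbc.symm]

theorem tripleProfile_of_ne (ha : m ≠ a) (hb : m ≠ b) (hc : m ≠ c) :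
    tripleProfile a b c pa pb pc m = ⟨[], List.nodup_nil⟩ := by
  simp [tripleProfile, ha, hb, hc]

end TripleProfile

structure ReversedRanking {M W : Type} (qbar : W → PrefList M) (a b c : M) (x y : W) : Prop where
  left : [a, b, c] <+ (qbar x).val
  right : [c, b, a] <+ (qbar y).val

namespace ReversedRanking

variable {M W : Type} {qbar : W → PrefList M} {a b c : M} {x y : W}
  (h : ReversedRanking qbar a b c x y) {i j k : Bool} {μ : Matching M W}
include h

theorem prefers_left {u v : M} (huv : [u, v] <+ [a, b, c]) : prefers (qbar x) u v :=
  Or.inl (huv.trans h.left)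

theorem prefers_right {u v : M} (huv : [u, v] <+ [c, b, a]) : prefers (qbar y) u v :=
  Or.inl (huv.trans h.right)

theorem mem_left {u : M} (hu : u ∈ [a, b, c]) : u ∈ (qbar x).val := h.left.subset hu

theorem mem_right {u : M} (hu : u ∈ [c, b, a]) : u ∈ (qbar y).val := h.right.subset hu

theorem ne_ab : a ≠ b := (h.prefers_left (by simp)).ne

theorem ne_ac : a ≠ c := (h.prefers_left (by simp)).ne

theorem ne_bc : b ≠ c := (h.prefers_left (by simp)).ne

theorem ne_xy : x ≠ y := by
  rintro rfl
  exact (h.prefers_left (u := a) (v := c) (by simp)).asymm (h.prefers_right (by simp))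

noncomputable def profile (i j k : Bool) : M → PrefList W :=
  tripleProfile a b c (bif i then .pair y x h.ne_xy.symm else .single y)
    (bif j then .pair y x h.ne_xy.symm else .single x) (bif k then .pair x y h.ne_xy else .single x)

@[simp] theorem profile_a :
    h.profile i j k a = bif i then .pair y x h.ne_xy.symm else .single y :=
  tripleProfile_left

@[simp] theorem profile_b :
    h.profile i j k b = bif j then .pair y x h.ne_xy.symm else .single x :=
  tripleProfile_middle h.ne_ab

@[simp] theorem profile_c : h.profile i j k c = bif k then .pair x y h.ne_xy else .single x :=
  tripleProfile_right h.ne_ac h.ne_bc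

theorem profile_of_ne {m : M} (ha : m ≠ a) (hb : m ≠ b) (hc : m ≠ c) :
    h.profile i j k m = ⟨[], List.nodup_nil⟩ :=
  tripleProfile_of_ne ha hb hc

theorem eq_or_eq_or_eq_of_profile_ne {m : M}
    (hm : h.profile false false false m ≠ h.profile true true true m) :
    m = a ∨ m = b ∨ m = c := by
  by_contra! hne
  exact hm (by rw [h.profile_of_ne hne.1 hne.2.1 hne.2.2, h.profile_of_ne hne.1 hne.2.1 hne.2.2])

theorem eq_x_or_eq_y_of_mem_profile {m : M} {w : W} (hw : w ∈ (h.profile i j k m).val) :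
    w = x ∨ w = y := by
  unfold profile tripleProfile at hw
  split_ifs at hw <;> cases i <;> cases j <;> cases k <;>
    simp [PrefList.single, PrefList.pair] at hw <;> tauto

section

variable (hst : IsStable (h.profile i j k) qbar μ)
include hst

theorem eq_or_eq_or_eq_of_toFun_eq_some {m : M} {w : W} (hm : μ.toFun m = some w) :
    m = a ∨ m = b ∨ m = c := by
  by_contra! hne
  have hw := (hst.mem_of_toFun_eq_some hm).1
  simp [h.profile_of_ne hne.1 hne.2.1 hne.2.2] at hw

theorem toFun_eq_x_or_y {m : M} (hm : μ.toFun m ≠ none) :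
    μ.toFun m = some x ∨ μ.toFun m = some y := by
  obtain ⟨w, hw⟩ := Option.ne_none_iff_exists'.mp hm
  rcases h.eq_x_or_eq_y_of_mem_profile (hst.mem_of_toFun_eq_some hw).1 with rfl | rfl <;>
    simp [hw]

end

theorem false_of_all_matched (hst : IsStable (h.profile i j k) qbar μ)
    (ha : μ.toFun a ≠ none) (hb : μ.toFun b ≠ none) (hc : μ.toFun c ≠ none) : False := by
  rcases h.toFun_eq_x_or_y hst ha with ha | ha <;> rcases h.toFun_eq_x_or_y hst hb with hb | hb <;>
    rcases h.toFun_eq_x_or_y hst hc with hc | hc <;>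
    first
    | exact h.ne_ab (μ.inj ha hb)
    | exact h.ne_ac (μ.inj ha hc)
    | exact h.ne_bc (μ.inj hb hc)

theorem toFun_a_fff (hst : IsStable (h.profile false false false) qbar μ) :
    μ.toFun a = some y := by
  refine hst.toFun_eq_of_head?_eq (by simp [PrefList.single]) (h.mem_right (by simp))
    fun m hm hma => ?_
  have hy := (hst.mem_of_toFun_eq_some hm).1
  rcases h.eq_or_eq_or_eq_of_toFun_eq_some hst hm with rfl | rfl | rfl
  · exact absurd rfl hma
  all_goals simp [PrefList.single, h.ne_xy.symm] at hy

theorem toFun_b_fff (hst : IsStable (h.profile false false false) qbar μ) :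
    μ.toFun b = some x := by
  refine hst.toFun_eq_of_head?_eq (by simp [PrefList.single]) (h.mem_left (by simp))
    fun m hm hmb => ?_
  have hx := (hst.mem_of_toFun_eq_some hm).1
  rcases h.eq_or_eq_or_eq_of_toFun_eq_some hst hm with rfl | rfl | rfl
  · simp [PrefList.single, h.ne_xy] at hx
  · exact absurd rfl hmb
  · exact h.prefers_left (by simp)

theorem toFun_a_tft (hst : IsStable (h.profile true false true) qbar μ) :
    μ.toFun a ≠ some y := by
  intro ha
  have hb : μ.toFun b = some x := by
    refine hst.toFun_eq_of_head?_eq (by simp [PrefList.single]) (h.mem_left (by simp))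
      fun m hm hmb => ?_
    rcases h.eq_or_eq_or_eq_of_toFun_eq_some hst hm with rfl | rfl | rfl
    · simp [ha, h.ne_xy.symm] at hm
    · exact absurd rfl hmb
    · exact h.prefers_left (by simp)
  refine h.false_of_all_matched hst (by simp [ha]) (by simp [hb]) ?_
  refine hst.toFun_ne_none (by simp [PrefList.pair]) (h.mem_right (by simp)) fun m hm hmc => ?_
  rcases h.eq_or_eq_or_eq_of_toFun_eq_some hst hm with rfl | rfl | rfl
  · exact h.prefers_right (by simp)
  · simp [hb, h.ne_xy] at hm
  · exact absurd rfl hmc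

theorem toFun_b_ttt (hst : IsStable (h.profile true true true) qbar μ) :
    μ.toFun b = none := by
  by_contra hb
  refine h.false_of_all_matched hst ?_ hb ?_
  · refine hst.toFun_ne_none (by simp [PrefList.pair]) (h.mem_left (by simp)) fun m hm hma => ?_
    rcases h.eq_or_eq_or_eq_of_toFun_eq_some hst hm with rfl | rfl | rfl
    · exact absurd rfl hma
    all_goals exact h.prefers_left (by simp)
  · refine hst.toFun_ne_none (by simp [PrefList.pair]) (h.mem_right (by simp)) fun m hm hmc => ?_
    rcases h.eq_or_eq_or_eq_of_toFun_eq_some hst hm with rfl | rfl | rfl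
    · exact h.prefers_right (by simp)
    · exact h.prefers_right (by simp)
    · exact absurd rfl hmc

theorem toFun_c_fft (hst : IsStable (h.profile false false true) qbar μ) :
    μ.toFun c ≠ some x := by
  intro hc
  refine h.ne_bc (μ.inj ?_ hc)
  refine hst.toFun_eq_of_head?_eq (by simp [PrefList.single]) (h.mem_left (by simp))
    fun m hm hmb => ?_
  have hx := (hst.mem_of_toFun_eq_some hm).1
  rcases h.eq_or_eq_or_eq_of_toFun_eq_some hst hm with rfl | rfl | rfl
  · simp [PrefList.single, h.ne_xy] at hx
  · exact absurd rfl hmb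
  · exact h.prefers_left (by simp)

theorem toFun_c_ftf (hst : IsStable (h.profile false true false) qbar μ) :
    μ.toFun c = some x := by
  have hb : μ.toFun b = some y := by
    refine hst.toFun_eq_of_head?_eq (by simp [PrefList.pair]) (h.mem_right (by simp))
      fun m hm hmb => ?_
    have hy := (hst.mem_of_toFun_eq_some hm).1
    rcases h.eq_or_eq_or_eq_of_toFun_eq_some hst hm with rfl | rfl | rfl
    · exact h.prefers_right (by simp)
    · exact absurd rfl hmb
    · simp [PrefList.single, h.ne_xy.symm] at hy
  refine hst.toFun_eq_of_head?_eq (by simp [PrefList.single]) (h.mem_left (by simp))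
    fun m hm hmc => ?_
  have hx := (hst.mem_of_toFun_eq_some hm).1
  rcases h.eq_or_eq_or_eq_of_toFun_eq_some hst hm with rfl | rfl | rfl
  · simp [PrefList.single, h.ne_xy] at hx
  · simp [hb, h.ne_xy.symm] at hm
  · exact absurd rfl hmc

theorem profile_mem_profileBox (i j k : Bool) :
    h.profile i j k ∈ profileBox (h.profile false false false) (h.profile true true true) := by
  intro m
  unfold profile tripleProfile
  split_ifs <;> cases i <;> cases j <;> cases k <;> simp

theorem not_OSPFor {I : Mech M W} (hI : IsStableRule qbar I.run) :
    ¬ (I.OSPFor a ∧ I.OSPFor b ∧ I.OSPFor c) := by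
  rintro ⟨ha, hb, hc⟩
  have hbox := h.profile_mem_profileBox
  have hconst : ¬ ∃ μ, ∀ p ∈ profileBox (h.profile false false false)
      (h.profile true true true), IsStable p qbar μ := by
    rintro ⟨μ, hμ⟩
    exact h.toFun_a_tft (hμ _ (hbox true false true))
      (h.toFun_a_fff (hμ _ (hbox false false false)))
  refine absurd (Mech.exists_not_OSPFor_of_profitable_deviations hconst ?_ I fun p _ => hI p) ?_
  swap
  · rintro ⟨m, hm, hosp⟩
    rcases h.eq_or_eq_or_eq_of_profile_ne hm with rfl | rfl | rfl <;> contradiction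
  intro m hm
  rcases h.eq_or_eq_or_eq_of_profile_ne hm with rfl | rfl | rfl
  · refine ⟨_, hbox true false true, _, hbox false false false, by simp, by simp,
      fun μ μ' hμ hμ' => ?_⟩
    rw [h.toFun_a_fff hμ']
    exact outPrefers_some_of_head?_eq (by simp [PrefList.pair]) (h.toFun_a_tft hμ)
  · refine ⟨_, hbox true true true, _, hbox false false false, by simp, by simp,
      fun μ μ' hμ hμ' => ?_⟩
    rw [h.toFun_b_fff hμ', h.toFun_b_ttt hμ]
    simp [outPrefers, PrefList.pair]
  · refine ⟨_, hbox false false true, _, hbox false true false, by simp, by simp,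
      fun μ μ' hμ hμ' => ?_⟩
    rw [h.toFun_c_ftf hμ']
    exact outPrefers_some_of_head?_eq (by simp [PrefList.pair]) (h.toFun_c_fft hμ)

end ReversedRanking

theorem forall_not_sublist_or_of_OSPFor {M W : Type} {qbar : W → PrefList M} {I : Mech M W}
    (hI : IsStableRule qbar I.run) {a b c : M} (hosp : I.OSPFor a ∧ I.OSPFor b ∧ I.OSPFor c) :
    (∀ x, ¬ [a, b, c] <+ (qbar x).val) ∨ (∀ y, ¬ [c, b, a] <+ (qbar y).val) := by
  by_contra! h
  obtain ⟨⟨x, hx⟩, ⟨y, hy⟩⟩ := h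
  exact (ReversedRanking.mk hx hy).not_OSPFor hI hosp

theorem List.Perm.exists_perm_map_eq {α : Type} {s t : List α} (hs : s.Nodup) (h : s ~ t) :
    ∃ σ : Equiv.Perm α, s.map σ = t := by
  obtain ⟨σ, hσ⟩ := Equiv.Perm.exists_extending_pair s.get (t.get ∘ Fin.cast h.length_eq)
    (List.nodup_iff_injective_get.mp hs)
    ((List.nodup_iff_injective_get.mp (h.nodup_iff.mp hs)).comp (Fin.cast_injective _))
  refine ⟨σ, List.ext_get (by simp [h.length_eq]) fun i h₁ h₂ => ?_⟩
  simpa using hσ ⟨i, by simpa using h₁⟩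

theorem sum_range_descFactorial_succ (n : ℕ) :
    ∑ k ∈ Finset.range (n + 2), (n + 1).descFactorial k =
      (n + 1) * ∑ k ∈ Finset.range (n + 1), n.descFactorial k + 1 := by
  rw [Finset.sum_range_succ', Finset.mul_sum]
  simp only [Nat.succ_descFactorial_succ, Nat.descFactorial_zero]

theorem sum_range_descFactorial_le (n : ℕ) :
    ∑ k ∈ Finset.range (n + 1), n.descFactorial k ≤ 3 * n ! := by
  suffices ∀ n, ∑ k ∈ Finset.range (n + 2), (n + 1).descFactorial k + 1 ≤ 3 * (n + 1)! by
    cases n with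
    | zero => simp
    | succ n => exact (Nat.le_succ _).trans (this n)
  intro n
  induction n with
  | zero => simp [Finset.sum_range_succ]
  | succ n ih =>
    rw [sum_range_descFactorial_succ, Nat.factorial_succ (n + 1)]
    nlinarith [Nat.mul_le_mul_left (n + 2) ih]

theorem Nat.card_subtype_forall_apply {ι β : Type} [Fintype ι] (P : β → Prop) :
    Nat.card {f : ι → β // ∀ i, P (f i)} = Nat.card {b // P b} ^ Fintype.card ι := by
  rw [Nat.card_congr Equiv.subtypePiEquivPi, Nat.card_pi, Finset.prod_const, Finset.card_univ]

theorem Nat.card_subtype_le_sum {β ι : Type} [Finite β] (s : Finset ι) {P : β → Prop}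
    {Q : ι → β → Prop} (h : ∀ b, P b → ∃ i ∈ s, Q i b) :
    Nat.card {b // P b} ≤ ∑ i ∈ s, Nat.card {b // Q i b} := by
  classical
  cases nonempty_fintype β
  simp only [Nat.card_eq_fintype_card, Fintype.card_subtype]
  refine (Finset.card_le_card fun b hb => ?_).trans Finset.card_biUnion_le
  obtain ⟨i, hi, hQ⟩ := h b (Finset.mem_filter.mp hb).2
  exact Finset.mem_biUnion.mpr ⟨i, hi, Finset.mem_filter.mpr ⟨Finset.mem_univ _, hQ⟩⟩

section Counting

open Finset

variable {α : Type}

def PrefList.mapEquiv (σ : Equiv.Perm α) : Equiv.Perm (PrefList α) where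
  toFun l := ⟨l.val.map σ, l.2.map σ.injective⟩
  invFun l := ⟨l.val.map σ.symm, l.2.map σ.symm.injective⟩
  left_inv l := by simp
  right_inv l := by simp

theorem card_sublist_map_perm (σ : Equiv.Perm α) (s : List α) :
    Nat.card {l : PrefList α // s.map σ <+ l.val} = Nat.card {l : PrefList α // s <+ l.val} :=
  Nat.card_congr <| ((PrefList.mapEquiv σ).subtypeEquiv fun l =>
    ⟨fun h => h.map σ, fun h => by simpa [PrefList.mapEquiv] using h.map σ.symm⟩).symm

theorem card_sublist_eq_of_perm {s t : List α} (hs : s.Nodup) (h : s ~ t) :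
    Nat.card {l : PrefList α // t <+ l.val} = Nat.card {l : PrefList α // s <+ l.val} := by
  obtain ⟨σ, rfl⟩ := h.exists_perm_map_eq hs
  exact card_sublist_map_perm σ s

variable [Fintype α]

theorem card_subperm_le {s : List α} (hs : s.Nodup) :
    Nat.card {l : PrefList α // s <+~ l.val} ≤
      s.length ! * Nat.card {l : PrefList α // s <+ l.val} := by
  classical
  simp only [Nat.card_eq_fintype_card, Fintype.card_subtype]
  calc _ ≤ #(s.permutations.toFinset.biUnion fun t => {l : PrefList α | t <+ l.val}) := by
        refine Finset.card_le_card fun l hl => ?_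
        obtain ⟨t, ht, htl⟩ := (Finset.mem_filter.mp hl).2
        exact Finset.mem_biUnion.mpr ⟨t, by simpa using ht, by simpa using htl⟩
    _ ≤ #s.permutations.toFinset * #{l : PrefList α | s <+ l.val} := by
        refine Finset.card_biUnion_le_card_mul _ _ _ fun t ht => le_of_eq ?_
        have hst : s ~ t := (List.mem_permutations.mp (List.mem_toFinset.mp ht)).symm
        simpa only [Nat.card_eq_fintype_card, Fintype.card_subtype] using
          card_sublist_eq_of_perm hs hst
    _ ≤ s.length ! * #{l : PrefList α | s <+ l.val} := by
        gcongr
        simpa only [List.length_permutations] using List.toFinset_card_le s.permutations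

theorem card_prefList_le : Nat.card (PrefList α) ≤ 3 * (Fintype.card α)! := by
  have hsurj : Function.Surjective fun e : Σ k : Fin (Fintype.card α + 1), Fin k ↪ α =>
      (⟨List.ofFn e.2, List.nodup_ofFn.mpr e.2.injective⟩ : PrefList α) := fun l =>
    ⟨⟨⟨l.val.length, Nat.lt_succ_of_le l.2.length_le_card⟩,
      ⟨l.val.get, List.nodup_iff_injective_get.mp l.2⟩⟩, Subtype.ext (List.ofFn_get _)⟩
  refine (Nat.card_le_card_of_surjective _ hsurj).trans ?_
  rw [Nat.card_eq_fintype_card, Fintype.card_sigma]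
  simp only [Fintype.card_embedding_eq, Fintype.card_fin]
  rw [Fin.sum_univ_eq_sum_range (fun k => (Fintype.card α).descFactorial k)]
  exact sum_range_descFactorial_le _

theorem factorial_le_card_isFull : (Fintype.card α)! ≤ Nat.card {l : PrefList α // IsFull l} := by
  classical
  rw [← Fintype.card_equiv (Fintype.equivFin α), ← Nat.card_eq_fintype_card]
  refine Nat.card_le_card_of_injective
    (fun e => ⟨⟨List.ofFn e.symm, List.nodup_ofFn.mpr e.symm.injective⟩,
      fun z => List.mem_ofFn.mpr ⟨e z, e.symm_apply_apply z⟩⟩) fun e e' h => ?_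
  exact Equiv.symm_bijective.injective
    (Equiv.coe_fn_injective (List.ofFn_injective (congrArg (fun l => l.val.val) h)))

variable {s : List α}

theorem card_prefList_le_mul_card_sublist (hs : s.Nodup) :
    Nat.card (PrefList α) ≤ 3 * s.length ! * Nat.card {l : PrefList α // s <+ l.val} := by
  have hfull : Nat.card {l : PrefList α // IsFull l} ≤ Nat.card {l : PrefList α // s <+~ l.val} :=
    Nat.card_le_card_of_injective _
      (Subtype.impEmbedding _ _ fun l hl => List.subperm_of_subset hs fun z _ => hl z).injective
  calc Nat.card (PrefList α) ≤ 3 * (Fintype.card α)! := card_prefList_le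
    _ ≤ 3 * (s.length ! * Nat.card {l : PrefList α // s <+ l.val}) := by
      gcongr
      exact factorial_le_card_isFull.trans (hfull.trans (card_subperm_le hs))
    _ = 3 * s.length ! * Nat.card {l : PrefList α // s <+ l.val} := (mul_assoc _ _ _).symm

theorem card_not_sublist_le (hs : s.Nodup) :
    (Nat.card {l : PrefList α // ¬ s <+ l.val} : ℝ) ≤
      (1 - 1 / (3 * s.length ! : ℝ)) * Nat.card (PrefList α) := by
  classical
  have hK : (0 : ℝ) < 3 * s.length ! := by positivity
  have hgood : (Nat.card (PrefList α) : ℝ) ≤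
      3 * s.length ! * Nat.card {l : PrefList α // s <+ l.val} := by
    exact_mod_cast card_prefList_le_mul_card_sublist hs
  have hbad : (Nat.card {l : PrefList α // ¬ s <+ l.val} : ℝ) =
      Nat.card (PrefList α) - Nat.card {l : PrefList α // s <+ l.val} := by
    simp only [Nat.card_eq_fintype_card]
    rw [Fintype.card_subtype_compl, Nat.cast_sub (Fintype.card_subtype_le _)]
  have hdiv : (Nat.card (PrefList α) : ℝ) / (3 * s.length !) ≤
      Nat.card {l : PrefList α // s <+ l.val} :=
    (div_le_iff₀ hK).mpr (by linarith)
  calc _ = (Nat.card (PrefList α) : ℝ) - Nat.card {l : PrefList α // s <+ l.val} := hbad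
    _ ≤ Nat.card (PrefList α) - Nat.card (PrefList α) / (3 * s.length !) := by linarith
    _ = (1 - 1 / (3 * s.length ! : ℝ)) * Nat.card (PrefList α) := by ring

end Counting

theorem card_forall_not_sublist_le {M W : Type} [Fintype M] [Fintype W] {s : List M}
    (hs : s.Nodup) :
    (Nat.card {qbar : W → PrefList M // ∀ x, ¬ s <+ (qbar x).val} : ℝ) ≤
      (1 - 1 / (3 * s.length ! : ℝ)) ^ Fintype.card W * Nat.card (W → PrefList M) := by
  rw [Nat.card_subtype_forall_apply (fun l : PrefList M => ¬ s <+ l.val), Nat.card_fun,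
    Nat.card_eq_fintype_card (α := W)]
  push_cast
  rw [← mul_pow]
  gcongr
  exact card_not_sublist_le hs

theorem card_exists_stable_OSP_le (M W : Type) [Fintype M] [Fintype W] :
    (Nat.card {qbar : W → PrefList M // ∃ I : Mech M W, IsStableRule qbar I.run ∧
        ∃ a b c : M, a ≠ b ∧ a ≠ c ∧ b ≠ c ∧ I.OSPFor a ∧ I.OSPFor b ∧ I.OSPFor c} : ℝ) ≤
      Fintype.card M ^ 3 * (17 / 18) ^ Fintype.card W * Nat.card (W → PrefList M) := by
  classical
  set D := (Finset.univ : Finset (M × M × M)).filter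
    fun t => t.1 ≠ t.2.1 ∧ t.1 ≠ t.2.2 ∧ t.2.1 ≠ t.2.2
  have hcover : ∀ qbar : W → PrefList M, (∃ I : Mech M W, IsStableRule qbar I.run ∧
      ∃ a b c : M, a ≠ b ∧ a ≠ c ∧ b ≠ c ∧ I.OSPFor a ∧ I.OSPFor b ∧ I.OSPFor c) →
      ∃ t ∈ D, ∀ x, ¬ [t.1, t.2.1, t.2.2] <+ (qbar x).val := by
    rintro qbar ⟨I, hI, a, b, c, hab, hac, hbc, hosp⟩
    rcases forall_not_sublist_or_of_OSPFor hI hosp with h | h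
    · exact ⟨(a, b, c), by simp [D, hab, hac, hbc], h⟩
    · exact ⟨(c, b, a), by simp [D, hab.symm, hac.symm, hbc.symm], h⟩
  have hterm : ∀ t ∈ D, (Nat.card {qbar : W → PrefList M //
      ∀ x, ¬ [t.1, t.2.1, t.2.2] <+ (qbar x).val} : ℝ) ≤
      (17 / 18) ^ Fintype.card W * Nat.card (W → PrefList M) := fun t ht => by
    have hs : [t.1, t.2.1, t.2.2].Nodup := by simp_all [D]
    have hr : (1 - 1 / (3 * [t.1, t.2.1, t.2.2].length ! : ℝ)) = 17 / 18 := by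
      norm_num [Nat.factorial]
    simpa only [hr] using card_forall_not_sublist_le (W := W) hs
  have hD : (D.card : ℝ) ≤ Fintype.card M ^ 3 := by
    exact_mod_cast (Finset.card_filter_le _ _).trans (by simp [Fintype.card_prod, pow_three])
  calc _ ≤ ∑ t ∈ D, (Nat.card {qbar : W → PrefList M //
        ∀ x, ¬ [t.1, t.2.1, t.2.2] <+ (qbar x).val} : ℝ) := by
        exact_mod_cast Nat.card_subtype_le_sum D hcover
    _ ≤ ∑ t ∈ D, (17 / 18 : ℝ) ^ Fintype.card W * Nat.card (W → PrefList M) :=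
        Finset.sum_le_sum hterm
    _ ≤ _ := by
        rw [Finset.sum_const, nsmul_eq_mul, ← mul_assoc]
        gcongr

/-- For `qbar` drawn uniformly at random from `P(M)^W`, for every
`d : ℕ` and every `ε > 0` there is `N` such that whenever `|M| ≥ 3`, `|W| ≥ N` and
`|M| ≤ |W| ^ d`, the probability that some `qbar`-stable matching mechanism is OSP
for more than two men is less than `ε`. -/
theorem random_market_no_stable_mech_OSP_for_three_men :
    ∀ (d : ℕ) (ε : ℝ), 0 < ε → ∃ N : ℕ,
      ∀ (M W : Type) [Fintype M] [Fintype W],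
        3 ≤ Fintype.card M → N ≤ Fintype.card W →
        Fintype.card M ≤ Fintype.card W ^ d →
        (Nat.card {qbar : W → PrefList M //
            ∃ I : Mech M W, IsStableRule qbar I.run ∧
              ∃ a b c : M, a ≠ b ∧ a ≠ c ∧ b ≠ c ∧
                I.OSPFor a ∧ I.OSPFor b ∧ I.OSPFor c} : ℝ) /
          (Nat.card (W → PrefList M) : ℝ) < ε := by
  intro d ε hε
  have hlim : Filter.Tendsto (fun n : ℕ => (n : ℝ) ^ (3 * d) * (17 / 18) ^ n) Filter.atTop
      (nhds 0) :=
    tendsto_pow_const_mul_const_pow_of_abs_lt_one _ (by norm_num [abs_of_pos])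
  obtain ⟨N, hN⟩ := Filter.eventually_atTop.mp (hlim.eventually (gt_mem_nhds hε))
  refine ⟨N, fun M W _ _ _ hNW hMW => ?_⟩
  have : Nonempty (PrefList M) := ⟨⟨[], List.nodup_nil⟩⟩
  have hcard : (0 : ℝ) < Nat.card (W → PrefList M) := by
    exact_mod_cast Nat.card_pos
  have hMW' : (Fintype.card M : ℝ) ^ 3 ≤ (Fintype.card W : ℝ) ^ (3 * d) := by
    rw [mul_comm, pow_mul]
    gcongr
    exact_mod_cast hMW
  rw [div_lt_iff₀ hcard]
  calc _ ≤ (Fintype.card M : ℝ) ^ 3 * (17 / 18) ^ Fintype.card W * Nat.card (W → PrefList M) :=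
        card_exists_stable_OSP_le M W
    _ ≤ (Fintype.card W : ℝ) ^ (3 * d) * (17 / 18) ^ Fintype.card W *
          Nat.card (W → PrefList M) := by
        gcongr
    _ < ε * Nat.card (W → PrefList M) := by
        gcongr
        exact hN _ hNW
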